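/- arXiv:1009.0098 — 5 statements merged into one kernel-verified Lean document; each statement's English description precedes it below -/
import Mathlib

section
/- Let p be a prime, n a natural number, and t ∈ ℤ_p a p-adic integer. Then the Volkenborn sums of the function x ↦ (t + x)^n converge to the value of the n-th Bernoulli polynomial at t; that is, in ℚ_p, the sequence N ↦ (1/p^N) · ∑_{x=0}^{p^N − 1} (t + x)^n tends (as N → ∞) to B_n(t), where B_n(t) denotes the evaluation at t of the n-th Bernoulli polynomial (a polynomial with rational coefficients, evaluated in ℚ_p). -/
/-!
Shifted Faulhaber: `(n + 1) ∑_{x < M} (t + x)^n = B_{n+1}(t + M) - B_{n+1}(t)`, by telescoping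
`B_{n+1}(y + 1) - B_{n+1}(y) = (n + 1) y^n`. Hence the `N`-th Volkenborn sum is the difference
quotient of `B_{n+1} / (n + 1)` at `t` with increment `p^N`, which tends to `0` in `ℚ_p`; the
limit is the derivative `B_{n+1}' / (n + 1) = B_n` at `t`.
-/

open Polynomial Filter Topology

theorem HasDerivAt.tendsto_slope_zero_comp {𝕜 F α : Type*} [NontriviallyNormedField 𝕜]
    [NormedAddCommGroup F] [NormedSpace 𝕜 F] {f : 𝕜 → F} {f' : F} {x : 𝕜} {l : Filter α}
    {h : α → 𝕜} (hf : HasDerivAt f f' x) (hh : Tendsto h l (𝓝 0)) (hh0 : ∀ᶠ a in l, h a ≠ 0) :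
    Tendsto (fun a => (h a)⁻¹ • (f (x + h a) - f x)) l (𝓝 f') :=
  hf.tendsto_slope_zero.comp <| tendsto_nhdsWithin_of_tendsto_nhds_of_eventually_within _ hh hh0

namespace Polynomial

section Algebra

variable {A : Type*} [CommRing A] [Algebra ℚ A]

theorem bernoulli_aeval_add_one (n : ℕ) (x : A) :
    aeval (x + 1) (bernoulli n) = aeval x (bernoulli n) + n * x ^ (n - 1) := by
  simpa [aeval_comp, add_comm] using congr(aeval x $(bernoulli_comp_one_add_X n))

theorem add_one_mul_sum_range_add_pow (n M : ℕ) (t : A) :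
    (n + 1 : A) * ∑ x ∈ Finset.range M, (t + x) ^ n =
      aeval (t + M) (bernoulli (n + 1)) - aeval t (bernoulli (n + 1)) := by
  induction M with
  | zero => simp
  | succ M ih =>
    rw [Finset.sum_range_succ, mul_add, ih, Nat.cast_succ, ← add_assoc, bernoulli_aeval_add_one]
    push_cast
    ring

end Algebra

theorem hasDerivAt_bernoulli_succ_div {𝕜 : Type*} [NontriviallyNormedField 𝕜] [CharZero 𝕜]
    (n : ℕ) (x : 𝕜) :
    HasDerivAt (fun y : 𝕜 => aeval y (bernoulli (n + 1)) / (n + 1)) (aeval x (bernoulli n)) x := by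
  have h := ((bernoulli (n + 1)).hasDerivAt_aeval x).div_const (n + 1 : 𝕜)
  rw [derivative_bernoulli_add_one] at h
  refine h.congr_deriv ?_
  rw [map_mul, mul_div_right_comm]
  simp [div_self (Nat.cast_add_one_ne_zero (R := 𝕜) n)]

end Polynomial

/-- The Volkenborn sums of `x ↦ (t + x)^n` converge in `ℚ_p` to the value `B_n(t)`
of the `n`-th Bernoulli polynomial at `t ∈ ℤ_p`. -/
theorem volkenborn_tendsto_bernoulliPoly (p : ℕ) [Fact p.Prime] (n : ℕ) (t : ℤ_[p]) :
    Filter.Tendsto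
      (fun N : ℕ => (1 / (p : ℚ_[p]) ^ N) *
        ∑ x ∈ Finset.range (p ^ N), ((t : ℚ_[p]) + (x : ℚ_[p])) ^ n)
      Filter.atTop
      (nhds (Polynomial.aeval (t : ℚ_[p]) (Polynomial.bernoulli n))) := by
  have hp0 : (p : ℚ_[p]) ≠ 0 := by exact_mod_cast (Fact.out : p.Prime).ne_zero
  have hpow : Tendsto (fun N : ℕ => (p : ℚ_[p]) ^ N) atTop (𝓝 0) :=
    tendsto_pow_atTop_nhds_zero_of_norm_lt_one Padic.norm_p_lt_one
  refine ((hasDerivAt_bernoulli_succ_div n (t : ℚ_[p])).tendsto_slope_zero_comp hpow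
    (.of_forall (pow_ne_zero · hp0))).congr fun N => ?_
  have hsum := add_one_mul_sum_range_add_pow n (p ^ N) (t : ℚ_[p])
  rw [Nat.cast_pow] at hsum
  rw [smul_eq_mul, ← sub_div, ← hsum, one_div,
    mul_div_cancel_left₀ _ (Nat.cast_add_one_ne_zero n)]
end

section
/- Let p be a prime and let n ≥ k be natural numbers. Then, in ℚ_p, the sequence N ↦ (1/p^N) · ∑_{x=0}^{p^N − 1} C(n,k) x^k (1 − x)^{n−k} tends (as N → ∞) to the rational number C(n,k) · ∑_{j=0}^{n−k} C(n−k, j) (−1)^{n−k−j} B_{n−j}, cast into ℚ_p. (Equivalently, ∫_{ℤ_p} B_{k,n}(x) dμ₁(x) = C(n,k) ∑_{j=0}^{n−k} C(n−k,j)(−1)^{n−k−j} B_{n−j}.) -/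
/-!
Expanding `(1 - x)^(n-k)` by the binomial theorem writes the Bernstein polynomial as a combination
of the monomials `x^(n-j)`, and the Volkenborn sums are linear in the integrand. For a monomial,
Faulhaber's formula makes `(1/M) ∑_{x<M} x^m` a polynomial in `M` with constant term `B_m`;
evaluated at `M = p^N → 0` in `ℚ_p`, it tends to `B_m`.
-/

open Finset Filter Topology

theorem inv_mul_sum_range_pow (m n : ℕ) (hn : n ≠ 0) :
    (n : ℚ)⁻¹ * ∑ x ∈ range n, (x : ℚ) ^ m =
      ∑ i ∈ range (m + 1), bernoulli i * (m + 1).choose i / (m + 1) * (n : ℚ) ^ (m - i) := by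
  rw [sum_range_pow, mul_sum]
  refine sum_congr rfl fun i hi => ?_
  rw [show m + 1 - i = m - i + 1 by have := mem_range.mp hi; omega, pow_succ]
  field_simp

theorem choose_mul_pow_mul_one_sub_pow {R : Type*} [CommRing R] (x : R) {n k : ℕ} (hkn : k ≤ n) :
    (n.choose k : R) * x ^ k * (1 - x) ^ (n - k) =
      ∑ j ∈ range (n - k + 1),
        (n.choose k * (n - k).choose j * (-1) ^ (n - k - j) : R) * x ^ (n - j) := by
  rw [sub_eq_add_neg, add_pow, mul_sum]
  refine sum_congr rfl fun j hj => ?_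
  have hexp : n - j = k + (n - k - j) := by have := mem_range.mp hj; omega
  rw [neg_pow, hexp, pow_add]
  ring

section Volkenborn

variable (p : ℕ) [Fact p.Prime]

noncomputable def volkenbornSum (f : ℕ → ℚ_[p]) (N : ℕ) : ℚ_[p] :=
  (1 / (p : ℚ_[p]) ^ N) * ∑ x ∈ range (p ^ N), f x

theorem volkenbornSum_sum_mul {ι : Type*} (s : Finset ι) (c : ι → ℚ_[p])
    (g : ι → ℕ → ℚ_[p]) (N : ℕ) :
    volkenbornSum p (fun x => ∑ j ∈ s, c j * g j x) N = ∑ j ∈ s, c j * volkenbornSum p (g j) N := by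
  simp only [volkenbornSum, mul_sum]
  rw [sum_comm]
  exact sum_congr rfl fun j _ => sum_congr rfl fun x _ => by ring

theorem tendsto_volkenbornSum_pow (m : ℕ) :
    Tendsto (volkenbornSum p fun x => (x : ℚ_[p]) ^ m) atTop (𝓝 (bernoulli m : ℚ_[p])) := by
  set c : ℕ → ℚ := fun i => bernoulli i * (m + 1).choose i / (m + 1)
  set F : ℚ_[p] → ℚ_[p] := fun t => ∑ i ∈ range (m + 1), (c i : ℚ_[p]) * t ^ (m - i)
  have hF_pow : ∀ N, volkenbornSum p (fun x => (x : ℚ_[p]) ^ m) N = F ((p : ℚ_[p]) ^ N) := by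
    intro N
    have hpN : p ^ N ≠ 0 := pow_ne_zero N (Fact.out : p.Prime).ne_zero
    have hfaulhaber := congrArg (fun q : ℚ => (q : ℚ_[p])) (inv_mul_sum_range_pow m (p ^ N) hpN)
    simp only [volkenbornSum, F, c, one_div]
    push_cast at hfaulhaber ⊢
    exact hfaulhaber
  have hF0 : F 0 = bernoulli m := by
    simp only [F, c, sum_range_succ, Nat.sub_self, pow_zero, mul_one, Nat.choose_succ_self_right]
    rw [sum_eq_zero fun i hi => by rw [zero_pow (by have := mem_range.mp hi; omega), mul_zero]]
    push_cast
    field_simp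
    ring
  have hF : Continuous F := by fun_prop
  have hpow : Tendsto (fun N => (p : ℚ_[p]) ^ N) atTop (𝓝 0) :=
    tendsto_pow_atTop_nhds_zero_of_norm_lt_one Padic.norm_p_lt_one
  rw [funext hF_pow, ← hF0]
  exact (hF.tendsto 0).comp hpow

end Volkenborn

/-- `∫_{ℤ_p} B_{k,n}(x) dμ₁(x) = C(n,k) ∑_{j=0}^{n−k} C(n−k,j)(−1)^{n−k−j} B_{n−j}`. -/
theorem volkenborn_bernstein_eq_sum_bernoulli (p : ℕ) [Fact p.Prime] (n k : ℕ) (hkn : k ≤ n) :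
    Filter.Tendsto
      (fun N : ℕ => (1 / (p : ℚ_[p]) ^ N) *
        ∑ x ∈ Finset.range (p ^ N),
          (n.choose k : ℚ_[p]) * (x : ℚ_[p]) ^ k * (1 - (x : ℚ_[p])) ^ (n - k))
      Filter.atTop
      (nhds (((n.choose k : ℚ) * ∑ j ∈ Finset.range (n - k + 1),
        ((n - k).choose j : ℚ) * (-1 : ℚ) ^ (n - k - j) * bernoulli (n - j) : ℚ) : ℚ_[p])) := by
  have hlim := tendsto_finsetSum (range (n - k + 1)) fun j _ =>
    (tendsto_volkenbornSum_pow p (n - j)).const_mul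
      ((n.choose k * (n - k).choose j * (-1) ^ (n - k - j) : ℚ_[p]))
  simp_rw [← volkenbornSum_sum_mul, ← choose_mul_pow_mul_one_sub_pow _ hkn] at hlim
  show Tendsto (volkenbornSum p _) atTop _
  convert hlim using 2
  push_cast
  rw [mul_sum]
  exact sum_congr rfl fun j _ => by ring
end

section
/- For all natural numbers n ≥ k, the following identity of rational numbers holds: ∑_{j=0}^{n−k} C(n−k, j) (−1)^{n−k−j} B_{n−j} = ∑_{j=0}^{k} C(k, j) (−1)^{k−j} · ∑_{l=0}^{n−j} C(n−j, l) (−1)^l B_l. -/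
/-!
The identity holds for an arbitrary sequence `a` in place of the Bernoulli numbers. Read `a l` as
the value on `X ^ l` of the linear functional `L` on polynomials. Then the inner sum on the right is
`L ((1 - X) ^ (n - j))` and the left side is `L (X ^ k * (1 - X) ^ (n - k))`, so the identity is the
image under `L` of `∑ j, C(k,j) (-1)^(k-j) (1 - X)^(n-j) = X^k (1 - X)^(n-k)`, which is the
binomial theorem for `X ^ k = (1 + (X - 1)) ^ k` multiplied by `(1 - X) ^ (n - k)`.
-/

section

open Finset Polynomial

variable {R : Type*} [CommRing R]

noncomputable def umbralEval (a : ℕ → R) : R[X] →ₗ[R] R :=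
  lsum fun l => LinearMap.mulRight R (a l)

theorem umbralEval_smul_X_pow (a : ℕ → R) (r : R) (l : ℕ) :
    umbralEval a (r • X ^ l) = r * a l := by
  rw [smul_eq_C_mul, C_mul_X_pow_eq_monomial]
  simp [umbralEval]

theorem one_sub_X_pow_eq_sum (N : ℕ) :
    (1 - X : R[X]) ^ N = ∑ l ∈ range (N + 1), ((N.choose l : R) * (-1) ^ l) • X ^ l := by
  rw [sub_eq_neg_add, add_pow]
  refine sum_congr rfl fun l _ => ?_
  rw [neg_pow, Algebra.smul_def]
  simp only [one_pow, mul_one, map_mul, map_natCast, map_pow, map_neg, map_one]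
  ring

theorem X_pow_mul_one_sub_X_pow_eq_sum {k n : ℕ} (hkn : k ≤ n) :
    (X : R[X]) ^ k * (1 - X) ^ (n - k) =
      ∑ j ∈ range (n - k + 1),
        (((n - k).choose j : R) * (-1) ^ (n - k - j)) • X ^ (n - j) := by
  rw [sub_eq_add_neg, add_pow, mul_sum]
  refine sum_congr rfl fun j hj => ?_
  have hsplit : n - j = k + (n - k - j) := by grind
  rw [hsplit, neg_pow, Algebra.smul_def, pow_add]
  simp only [one_pow, one_mul, map_mul, map_natCast, map_pow, map_neg, map_one]
  ring

theorem umbralEval_one_sub_X_pow (a : ℕ → R) (N : ℕ) :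
    umbralEval a ((1 - X) ^ N) = ∑ l ∈ range (N + 1), (N.choose l : R) * (-1) ^ l * a l := by
  simp only [one_sub_X_pow_eq_sum, map_sum, umbralEval_smul_X_pow]

theorem umbralEval_X_pow_mul_one_sub_X_pow (a : ℕ → R) {k n : ℕ} (hkn : k ≤ n) :
    umbralEval a (X ^ k * (1 - X) ^ (n - k)) =
      ∑ j ∈ range (n - k + 1), ((n - k).choose j : R) * (-1) ^ (n - k - j) * a (n - j) := by
  simp only [X_pow_mul_one_sub_X_pow_eq_sum hkn, map_sum, umbralEval_smul_X_pow]

theorem sum_choose_mul_neg_one_pow_smul_one_sub_pow {A : Type*} [CommRing A] [Algebra R A]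
    (x : A) {k n : ℕ} (hkn : k ≤ n) :
    ∑ j ∈ range (k + 1), ((k.choose j : R) * (-1) ^ (k - j)) • (1 - x) ^ (n - j) =
      x ^ k * (1 - x) ^ (n - k) := by
  have hx : x ^ k = ∑ j ∈ range (k + 1), 1 ^ j * (x - 1) ^ (k - j) * k.choose j := by
    rw [← add_pow, add_sub_cancel]
  rw [hx, sum_mul]
  refine sum_congr rfl fun j hj => ?_
  have hsplit : n - j = (k - j) + (n - k) := by grind
  have hsign : (x - 1) ^ (k - j) = (-1) ^ (k - j) * (1 - x) ^ (k - j) := by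
    rw [← mul_pow]; ring
  rw [hsplit, pow_add, hsign, Algebra.smul_def]
  simp only [one_pow, one_mul, map_mul, map_natCast, map_pow, map_neg, map_one]
  ring

theorem sum_choose_mul_neg_one_pow_mul_sub_eq (a : ℕ → R) {k n : ℕ} (hkn : k ≤ n) :
    ∑ j ∈ range (n - k + 1), ((n - k).choose j : R) * (-1) ^ (n - k - j) * a (n - j) =
      ∑ j ∈ range (k + 1), (k.choose j : R) * (-1) ^ (k - j) *
        ∑ l ∈ range (n - j + 1), ((n - j).choose l : R) * (-1) ^ l * a l := calc
  _ = umbralEval a (X ^ k * (1 - X) ^ (n - k)) := (umbralEval_X_pow_mul_one_sub_X_pow a hkn).symm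
  _ = umbralEval a
        (∑ j ∈ range (k + 1), ((k.choose j : R) * (-1) ^ (k - j)) • (1 - X) ^ (n - j)) := by
    rw [sum_choose_mul_neg_one_pow_smul_one_sub_pow X hkn]
  _ = _ := by simp only [map_sum, map_smul, umbralEval_one_sub_X_pow, smul_eq_mul]

end

/-- Proposition: for `n ≥ k`,
`∑_{j=0}^{n−k} C(n−k,j)(−1)^{n−k−j} B_{n−j}
  = ∑_{j=0}^{k} C(k,j)(−1)^{k−j} ∑_{l=0}^{n−j} C(n−j,l)(−1)^l B_l`. -/
theorem bernoulli_sum_identity (n k : ℕ) (hkn : k ≤ n) :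
    ∑ j ∈ Finset.range (n - k + 1),
        ((n - k).choose j : ℚ) * (-1 : ℚ) ^ (n - k - j) * bernoulli (n - j)
      = ∑ j ∈ Finset.range (k + 1), (k.choose j : ℚ) * (-1 : ℚ) ^ (k - j) *
          ∑ l ∈ Finset.range (n - j + 1),
            ((n - j).choose l : ℚ) * (-1 : ℚ) ^ l * bernoulli l :=
  sum_choose_mul_neg_one_pow_mul_sub_eq bernoulli hkn
end

section
/- Let p be a prime and let n > 1 be a natural number. Then, in ℚ_p, the sequence N ↦ (1/p^N) · (∑_{x=0}^{p^N − 1} (1 − x)^n − ∑_{x=0}^{p^N − 1} x^n) tends (as N → ∞) to the natural number n (viewed in ℚ_p). (Equivalently, ∫_{ℤ_p} (1−x)^n dμ₁(x) = ∫_{ℤ_p} x^n dμ₁(x) + n.) -/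
/-!
By Faulhaber's formula, `(∑_{x<M} x^k) / M` is a polynomial in `M` with constant term `B_k`;
since `p^N → 0` in `ℚ_p`, the Volkenborn integral of `x^k` is `B_k`. Expanding `(1 - x)^n`
binomially, the integral of `(1 - x)^n` is
`∑_{k ≤ n} C(n,k) (-1)^k B_k = ∑_{k ≤ n} C(n,k) B'_k = n + B'_n`, and `B'_n = B_n` for `n ≠ 1`.
-/

open Filter Finset Topology

section Faulhaber

variable {K : Type*} [Field K] [CharZero K]

theorem sum_range_pow_div_eq_sum_bernoulli (M k : ℕ) (hM : (M : K) ≠ 0) :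
    (∑ x ∈ range M, (x : K) ^ k) / M =
      ∑ i ∈ range (k + 1),
        ((bernoulli i * (k + 1).choose i / (k + 1) : ℚ) : K) * (M : K) ^ (k - i) := by
  have hfaulhaber := congrArg (Rat.cast : ℚ → K) (sum_range_pow M k)
  push_cast at hfaulhaber
  rw [hfaulhaber, sum_div]
  refine sum_congr rfl fun i hi => ?_
  rw [show k + 1 - i = k - i + 1 by have := mem_range.mp hi; omega, pow_succ]
  have hk : (k : K) + 1 ≠ 0 := by exact_mod_cast k.succ_ne_zero
  push_cast
  field_simp

variable [TopologicalSpace K] [IsTopologicalRing K] {ι : Type*} {l : Filter ι} {M : ι → ℕ}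

theorem tendsto_sum_range_pow_div (hM : ∀ᶠ j in l, (M j : K) ≠ 0)
    (hM₀ : Tendsto (fun j => (M j : K)) l (𝓝 0)) (k : ℕ) :
    Tendsto (fun j => (∑ x ∈ range (M j), (x : K) ^ k) / M j) l (𝓝 (bernoulli k : K)) := by
  set c : ℕ → K := fun i => ((bernoulli i * (k + 1).choose i / (k + 1) : ℚ) : K)
  have hpoly : Continuous fun t : K => ∑ i ∈ range (k + 1), c i * t ^ (k - i) := by fun_prop
  have hc : c k = bernoulli k := by
    have hk : (k : ℚ) + 1 ≠ 0 := by exact_mod_cast k.succ_ne_zero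
    simp only [c, Nat.choose_succ_self_right]
    push_cast
    field_simp
  have hlim := (hpoly.tendsto 0).comp hM₀
  rw [sum_range_succ, Nat.sub_self, pow_zero, mul_one, hc, sum_eq_zero, zero_add] at hlim
  · exact hlim.congr' (hM.mono fun j hj => (sum_range_pow_div_eq_sum_bernoulli (M j) k hj).symm)
  · intro i hi
    rw [zero_pow (by have := mem_range.mp hi; omega), mul_zero]

theorem tendsto_sum_range_one_sub_pow_div (hM : ∀ᶠ j in l, (M j : K) ≠ 0)
    (hM₀ : Tendsto (fun j => (M j : K)) l (𝓝 0)) (n : ℕ) :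
    Tendsto (fun j => (∑ x ∈ range (M j), (1 - (x : K)) ^ n) / M j) l
      (𝓝 (n + bernoulli' n : K)) := by
  have hbinom : ∀ x : K,
      (1 - x) ^ n = ∑ k ∈ range (n + 1), ((-1) ^ k * n.choose k : K) * x ^ k := by
    intro x
    rw [sub_eq_neg_add, add_pow]
    refine sum_congr rfl fun k _ => ?_
    rw [neg_pow]
    ring
  have hexpand : ∀ j, (∑ x ∈ range (M j), (1 - (x : K)) ^ n) / M j =
      ∑ k ∈ range (n + 1),
        ((-1) ^ k * n.choose k : K) * ((∑ x ∈ range (M j), (x : K) ^ k) / M j) := by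
    intro j
    simp_rw [hbinom]
    rw [sum_comm, sum_div]
    simp_rw [← mul_sum, mul_div_assoc]
  have hvalue :
      ∑ k ∈ range (n + 1), (n.choose k * ((-1) ^ k * bernoulli k) : ℚ) = n + bernoulli' n := by
    simp_rw [← bernoulli'_eq_bernoulli]
    rw [sum_range_succ, sum_bernoulli', Nat.choose_self, Nat.cast_one, one_mul]
  have hlim := tendsto_finsetSum (range (n + 1)) fun k _ =>
    (tendsto_sum_range_pow_div hM hM₀ k).const_mul ((-1) ^ k * n.choose k : K)
  rw [← funext hexpand] at hlim
  convert hlim using 2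
  rw [← Rat.cast_natCast, ← Rat.cast_add, ← hvalue]
  push_cast
  exact sum_congr rfl fun k _ => by ring

end Faulhaber

/-- For `n > 1`, `∫_{ℤ_p} (1−x)^n dμ₁(x) = ∫_{ℤ_p} x^n dμ₁(x) + n`, stated as the convergence
of the difference of the Volkenborn sums to `n`. -/
theorem volkenborn_one_sub_pow_sub_pow (p : ℕ) [Fact p.Prime] (n : ℕ) (hn : 1 < n) :
    Filter.Tendsto
      (fun N : ℕ => (1 / (p : ℚ_[p]) ^ N) *
        ((∑ x ∈ Finset.range (p ^ N), (1 - (x : ℚ_[p])) ^ n)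
          - ∑ x ∈ Finset.range (p ^ N), (x : ℚ_[p]) ^ n))
      Filter.atTop
      (nhds (n : ℚ_[p])) := by
  have hp : (p : ℚ_[p]) ≠ 0 := Nat.cast_ne_zero.mpr (Fact.out : p.Prime).ne_zero
  have hM : ∀ᶠ N in atTop, ((p ^ N : ℕ) : ℚ_[p]) ≠ 0 :=
    Eventually.of_forall fun N => by rw [Nat.cast_pow]; exact pow_ne_zero N hp
  have hM₀ : Tendsto (fun N => ((p ^ N : ℕ) : ℚ_[p])) atTop (𝓝 0) := by
    simpa using tendsto_pow_atTop_nhds_zero_of_norm_lt_one (Padic.norm_p_lt_one (p := p))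
  have hlim :=
    (tendsto_sum_range_one_sub_pow_div hM hM₀ n).sub (tendsto_sum_range_pow_div hM hM₀ n)
  rw [bernoulli_eq_bernoulli'_of_ne_one hn.ne', add_sub_cancel_right] at hlim
  refine hlim.congr fun N => ?_
  push_cast
  ring
end

section
/- Let p be a prime and let n ≥ k be natural numbers with k > 1. Then, in ℚ_p, the sequence N ↦ (1/p^N) · ∑_{x=0}^{p^N − 1} x^{n−k} (1 − x)^k tends (as N → ∞) to the rational number ∑_{l=0}^{n−k} C(n−k, l) (−1)^l (B_{l+k} + l + k), cast into ℚ_p; equivalently, ∫_{ℤ_p} x^{n−k}(1−x)^k dμ₁(x) = ∑_{l=0}^{n−k} C(n−k,l)(−1)^l (B_{l+k} + l + k). -/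
open Filter Finset

lemma volkenborn_pow (p : ℕ) [Fact p.Prime] (e : ℕ) :
    Tendsto (fun N : ℕ => (1 / (p : ℚ_[p]) ^ N) * ∑ x ∈ range (p ^ N), (x : ℚ_[p]) ^ e)
      atTop (nhds ((bernoulli e : ℚ) : ℚ_[p])) := by
  have hp0 : (p : ℚ) ≠ 0 := Nat.cast_ne_zero.mpr (Fact.out : p.Prime).ne_zero
  have key : ∀ N : ℕ, (1 / (p : ℚ_[p]) ^ N) * ∑ x ∈ range (p ^ N), (x : ℚ_[p]) ^ e
      = ∑ i ∈ range (e + 1),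
          ((bernoulli i * ((e + 1).choose i) / (e + 1) : ℚ) : ℚ_[p]) * ((p : ℚ_[p]) ^ N) ^ (e - i) := by
    intro N
    have h1 : (∑ x ∈ range (p ^ N), (x : ℚ) ^ e)
        = ∑ i ∈ range (e + 1), bernoulli i * ((e + 1).choose i) * ((p ^ N : ℕ) : ℚ) ^ (e + 1 - i) / (e + 1) :=
      sum_range_pow (p ^ N) e
    have h2 : (1 / (p : ℚ) ^ N) * ∑ x ∈ range (p ^ N), (x : ℚ) ^ e
        = ∑ i ∈ range (e + 1),
            (bernoulli i * ((e + 1).choose i) / (e + 1)) * ((p : ℚ) ^ N) ^ (e - i) := by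
      rw [h1, Finset.mul_sum]
      refine Finset.sum_congr rfl fun i hi => ?_
      have hie : i ≤ e := Nat.lt_succ_iff.mp (Finset.mem_range.mp hi)
      have : e + 1 - i = (e - i) + 1 := by omega
      rw [this]
      push_cast
      rw [pow_succ]
      field_simp
    calc (1 / (p : ℚ_[p]) ^ N) * ∑ x ∈ range (p ^ N), (x : ℚ_[p]) ^ e
        = (((1 / (p : ℚ) ^ N) * ∑ x ∈ range (p ^ N), (x : ℚ) ^ e : ℚ) : ℚ_[p]) := by push_cast; ring
      _ = _ := by rw [h2]; push_cast; ring
  simp only [key]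
  have hlim : Tendsto (fun N : ℕ => (p : ℚ_[p]) ^ N) atTop (nhds 0) := by
    apply tendsto_pow_atTop_nhds_zero_of_norm_lt_one
    rw [Padic.norm_p]
    exact inv_lt_one_of_one_lt₀ (by exact_mod_cast (Fact.out : p.Prime).one_lt)
  have : Tendsto (fun N : ℕ => ∑ i ∈ range (e + 1),
      ((bernoulli i * ((e + 1).choose i) / (e + 1) : ℚ) : ℚ_[p]) * ((p : ℚ_[p]) ^ N) ^ (e - i))
      atTop (nhds (∑ i ∈ range (e + 1),
      ((bernoulli i * ((e + 1).choose i) / (e + 1) : ℚ) : ℚ_[p]) * (if i = e then 1 else 0))) := by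
    apply tendsto_finset_sum
    intro i hi
    rcases eq_or_ne i e with rfl | hie
    · simpa using tendsto_const_nhds
    · have hlt : i < e := lt_of_le_of_ne (Nat.lt_succ_iff.mp (Finset.mem_range.mp hi)) hie
      simp only [if_neg hie, mul_zero]
      have h0 : Tendsto (fun N : ℕ => ((p : ℚ_[p]) ^ N) ^ (e - i)) atTop (nhds 0) := by
        have := hlim.pow (e - i)
        simpa [zero_pow (by omega : e - i ≠ 0)] using this
      simpa using h0.const_mul _
  convert this using 2
  rw [show (fun i => ((bernoulli i * ((e + 1).choose i) / (e + 1) : ℚ) : ℚ_[p]) * (if i = e then 1 else 0))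
      = (fun i => if i = e then ((bernoulli i * ((e + 1).choose i) / (e + 1) : ℚ) : ℚ_[p]) else 0) from
    funext fun i => by split <;> simp]
  rw [Finset.sum_ite_eq' (range (e+1)) e]
  have he : (bernoulli e * ((e + 1).choose e : ℕ) / (e + 1) : ℚ) = bernoulli e := by
    rw [Nat.choose_succ_self_right]
    field_simp
    rw [Nat.cast_succ]
  simp [he]
  rw [mul_div_assoc, div_self (by exact_mod_cast Nat.succ_ne_zero e : ((e : ℚ_[p]) + 1) ≠ 0), mul_one]

lemma sum_choose_neg_one_bernoulli (M : ℕ) (hM : M ≠ 1) :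
    ∑ j ∈ range (M + 1), (M.choose j : ℚ) * (-1 : ℚ) ^ j * bernoulli j = bernoulli M + M := by
  have h : ∀ j : ℕ, (-1 : ℚ) ^ j * bernoulli j = bernoulli' j := by
    intro j
    rw [bernoulli, ← mul_assoc, ← pow_add, Even.neg_one_pow ⟨j, rfl⟩, one_mul]
  have h2 : ∑ j ∈ range (M + 1), (M.choose j : ℚ) * (-1 : ℚ) ^ j * bernoulli j
      = ∑ j ∈ range (M + 1), (M.choose j : ℚ) * bernoulli' j := by
    refine Finset.sum_congr rfl fun j _ => ?_
    rw [mul_assoc, h]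
  rw [h2, Finset.sum_range_succ, sum_bernoulli', Nat.choose_self,
    bernoulli_eq_bernoulli'_of_ne_one hM]
  push_cast
  ring

lemma volkenborn_one_sub_pow (p : ℕ) [Fact p.Prime] (M : ℕ) (hM : M ≠ 1) :
    Tendsto (fun N : ℕ => (1 / (p : ℚ_[p]) ^ N) * ∑ x ∈ range (p ^ N), (1 - (x : ℚ_[p])) ^ M)
      atTop (nhds ((bernoulli M + M : ℚ) : ℚ_[p])) := by
  have key : ∀ N : ℕ, (1 / (p : ℚ_[p]) ^ N) * ∑ x ∈ range (p ^ N), (1 - (x : ℚ_[p])) ^ M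
      = ∑ j ∈ range (M + 1), ((M.choose j : ℚ_[p]) * (-1) ^ j) *
          ((1 / (p : ℚ_[p]) ^ N) * ∑ x ∈ range (p ^ N), (x : ℚ_[p]) ^ j) := by
    intro N
    have hx : ∀ x : ℚ_[p], (1 - x) ^ M
        = ∑ j ∈ range (M + 1), ((M.choose j : ℚ_[p]) * (-1) ^ j) * x ^ j := by
      intro x
      have := add_pow (-x) 1 M
      rw [show (-x) + 1 = 1 - x by ring] at this
      rw [this]
      refine Finset.sum_congr rfl fun j _ => ?_
      rw [neg_pow]
      ring
    calc (1 / (p : ℚ_[p]) ^ N) * ∑ x ∈ range (p ^ N), (1 - (x : ℚ_[p])) ^ M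
        = (1 / (p : ℚ_[p]) ^ N) * ∑ x ∈ range (p ^ N),
            ∑ j ∈ range (M + 1), ((M.choose j : ℚ_[p]) * (-1) ^ j) * (x : ℚ_[p]) ^ j := by
          congr 1
          exact Finset.sum_congr rfl fun x _ => hx _
      _ = _ := by
          rw [Finset.sum_comm, Finset.mul_sum]
          refine Finset.sum_congr rfl fun j _ => ?_
          rw [← Finset.mul_sum]
          ring
  simp only [key]
  have := tendsto_finset_sum (range (M + 1)) (fun j _ =>
    ((volkenborn_pow p j).const_mul ((M.choose j : ℚ_[p]) * (-1) ^ j)))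
  convert this using 2
  rw [← sum_choose_neg_one_bernoulli M hM]
  push_cast
  ring

/-- For `k > 1` and `n ≥ k`,
`∫_{ℤ_p} x^{n−k}(1−x)^k dμ₁(x) = ∑_{l=0}^{n−k} C(n−k,l)(−1)^l (B_{l+k} + l + k)`. -/
theorem volkenborn_bernstein_symm (p : ℕ) [Fact p.Prime] (n k : ℕ) (hkn : k ≤ n) (hk : 1 < k) :
    Filter.Tendsto
      (fun N : ℕ => (1 / (p : ℚ_[p]) ^ N) *
        ∑ x ∈ Finset.range (p ^ N), (x : ℚ_[p]) ^ (n - k) * (1 - (x : ℚ_[p])) ^ k)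
      Filter.atTop
      (nhds ((∑ l ∈ Finset.range (n - k + 1),
        ((n - k).choose l : ℚ) * (-1 : ℚ) ^ l * (bernoulli (l + k) + l + k) : ℚ) : ℚ_[p])) := by
  set m := n - k with hm
  have hx : ∀ x : ℚ_[p], x ^ m * (1 - x) ^ k
      = ∑ l ∈ range (m + 1), (((m.choose l : ℚ_[p])) * (-1) ^ l) * (1 - x) ^ (l + k) := by
    intro x
    have h1 : x ^ m = ∑ l ∈ range (m + 1), ((m.choose l : ℚ_[p]) * (-1) ^ l) * (1 - x) ^ l := by
      have := add_pow (-(1 - x)) 1 m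
      rw [show (-(1 - x)) + 1 = x by ring] at this
      rw [this]
      refine Finset.sum_congr rfl fun l _ => ?_
      rw [neg_pow]
      ring
    rw [h1, Finset.sum_mul]
    refine Finset.sum_congr rfl fun l _ => ?_
    rw [pow_add]
    ring
  have key : ∀ N : ℕ, (1 / (p : ℚ_[p]) ^ N) *
        ∑ x ∈ Finset.range (p ^ N), (x : ℚ_[p]) ^ m * (1 - (x : ℚ_[p])) ^ k
      = ∑ l ∈ range (m + 1), ((m.choose l : ℚ_[p]) * (-1) ^ l) *
          ((1 / (p : ℚ_[p]) ^ N) * ∑ x ∈ range (p ^ N), (1 - (x : ℚ_[p])) ^ (l + k)) := by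
    intro N
    calc (1 / (p : ℚ_[p]) ^ N) * ∑ x ∈ Finset.range (p ^ N), (x : ℚ_[p]) ^ m * (1 - (x : ℚ_[p])) ^ k
        = (1 / (p : ℚ_[p]) ^ N) * ∑ x ∈ range (p ^ N),
            ∑ l ∈ range (m + 1), ((m.choose l : ℚ_[p]) * (-1) ^ l) * (1 - (x : ℚ_[p])) ^ (l + k) := by
          congr 1
          exact Finset.sum_congr rfl fun x _ => hx _
      _ = _ := by
          rw [Finset.sum_comm, Finset.mul_sum]
          refine Finset.sum_congr rfl fun l _ => ?_
          rw [← Finset.mul_sum]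
          ring
  simp only [key]
  have := tendsto_finset_sum (range (m + 1)) (fun l (_ : l ∈ range (m + 1)) =>
    ((volkenborn_one_sub_pow p (l + k) (by omega)).const_mul ((m.choose l : ℚ_[p]) * (-1) ^ l)))
  convert this using 2
  push_cast
  refine Finset.sum_congr rfl fun l _ => ?_
  push_cast
  ring
end
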